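/- arXiv:2103.04595 — 4 statements merged into one kernel-verified Lean document; each statement's English description precedes it below -/
import Mathlib

section
/- Let G be an acyclic digraph and (s,t) a pair of distinct vertices with (s,t) ∉ E(G) such that G+(s,t) is acyclic. Then for every vertex v ∈ R^▽, R_{G+(s,t)}(v) \ R_G(v) = R_△ \ ⋃_{b ∈ R_G(v) ∩ B} R_G(b), and for every vertex v ∉ R^▽, R_{G+(s,t)}(v) \ R_G(v) = ∅. -/
variable {V : Type*}

/-- Reachability in a digraph given by its edge relation `E`
(every vertex reaches itself). -/
def Reach (E : V → V → Prop) : V → V → Prop := Relation.ReflTransGen E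

/-- The reachability set `R_G(v)` of a vertex `v`. -/
def RSet (E : V → V → Prop) (v : V) : Set V := {u | Reach E v u}

/-- The underlying undirected simple graph of a digraph. -/
def Underlying (E : V → V → Prop) : SimpleGraph V where
  Adj u v := u ≠ v ∧ (E u v ∨ E v u)
  symm := ⟨fun u v h => ⟨h.1.symm, h.2.symm⟩⟩
  loopless := ⟨fun v h => h.1 rfl⟩

/-- A polyforest: a digraph with no antiparallel arcs (hence no self-loops)
whose underlying undirected graph is a forest. -/
def IsPolyforest (E : V → V → Prop) : Prop :=
  (∀ u v, E u v → ¬ E v u) ∧ (Underlying E).IsAcyclic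

/-- The weighted reachability number `r_{G,a}(v) = ∑_{u ∈ R_G(v)} a_u`. -/
noncomputable def wReach (E : V → V → Prop) (a : V → ℝ) (v : V) : ℝ :=
  ∑ᶠ u ∈ RSet E v, a u

/-- An acyclic digraph: one with no directed cycles. -/
def IsAcyclicDigraph (E : V → V → Prop) : Prop := ∀ v, ¬ Relation.TransGen E v v

/-- The digraph `G + (s,t)` obtained by inserting the edge `(s,t)`. -/
def AddEdge (E : V → V → Prop) (s t : V) : V → V → Prop :=
  fun u v => E u v ∨ (u = s ∧ v = t)

/-- `R^▽`: the set of vertices that can reach `s` (including `s`). -/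
def RDown (E : V → V → Prop) (s : V) : Set V := {v | Reach E v s}

/-- `R_△`: the set of vertices reachable from `t` (including `t`). -/
def RUp (E : V → V → Prop) (t : V) : Set V := {v | Reach E t v}

/-- The boundary set `B ⊆ R^▽` w.r.t. `G` and `(s,t)`: vertices `b ∈ R^▽` admitting a
directed path in `G` from `b` to some vertex of `R_△` whose internal vertices avoid `R^▽`. -/
def BoundarySet (E : V → V → Prop) (s t : V) : Set V :=
  {b | b ∈ RDown E s ∧ ∃ c w, c ∈ RUp E t ∧ E b w ∧
    Relation.ReflTransGen (fun x y => E x y ∧ x ∉ RDown E s) w c}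

/-- The digraph obtained by deleting the edge set `F`. -/
def DelEdges (E : V → V → Prop) (F : Set (V × V)) : V → V → Prop :=
  fun u v => E u v ∧ (u, v) ∉ F

/-- `F` is a feedback edge set of the digraph `E`: after deleting `F`, the underlying
undirected (multi)graph is acyclic, i.e. no antiparallel pair (nor self-loop) remains and
the underlying simple graph is acyclic. -/
def IsFES (E : V → V → Prop) (F : Set (V × V)) : Prop :=
  (∀ u v, DelEdges E F u v → ¬ DelEdges E F v u) ∧ (Underlying (DelEdges E F)).IsAcyclic

/-- The feedback edge number: the minimum size of a feedback edge set. -/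
noncomputable def feNumber (E : V → V → Prop) : ℕ :=
  sInf {n | ∃ F : Set (V × V), F.ncard = n ∧ IsFES E F}

/-- Vertices are identified iff they lie in the same strongly connected component. -/
def sccSetoid (E : V → V → Prop) : Setoid V where
  r u v := Reach E u v ∧ Reach E v u
  iseqv := ⟨fun _ => ⟨Relation.ReflTransGen.refl, Relation.ReflTransGen.refl⟩,
    fun h => ⟨h.2, h.1⟩,
    fun h₁ h₂ => ⟨Relation.ReflTransGen.trans h₁.1 h₂.1,
      Relation.ReflTransGen.trans h₂.2 h₁.2⟩⟩

/-- The condensation `G^SCC`: its vertices are the strongly connected components of `G`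
(as a quotient), with an edge `C → C'` (for `C ≠ C'`) iff some edge of `G` goes from `C` to `C'`. -/
def Condensation (E : V → V → Prop) :
    Quotient (sccSetoid E) → Quotient (sccSetoid E) → Prop :=
  fun C C' => C ≠ C' ∧ ∃ u v, E u v ∧
    Quotient.mk (sccSetoid E) u = C ∧ Quotient.mk (sccSetoid E) v = C'


/-!
A new path created by the edge `(s,t)` must use it, so it runs `v ⇝ s → t ⇝ u`, and since `t`
cannot reach `s` (that would close a cycle through `(s,t)`) the part after `t` is an old path.
Hence only vertices of `R^▽` gain anything, and what they gain lies in `R_△`. A vertex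
`u ∈ R_△` that was already reachable from `v ∈ R^▽` is reached by an old path that leaves
`R^▽` for the last time at some vertex `b`; that `b` is a boundary, which is exactly what the
union over `R_G(v) ∩ B` subtracts.
-/

open Relation

section

variable {V : Type*} {E : V → V → Prop} {s t : V}

lemma reach_addEdge_of_reach {a b : V} (h : Reach E a b) : Reach (AddEdge E s t) a b :=
  ReflTransGen.mono (fun _ _ => Or.inl) _ _ h

lemma reach_addEdge_of_reach_of_reach {a b : V} (has : Reach E a s) (htb : Reach E t b) :
    Reach (AddEdge E s t) a b :=
  ReflTransGen.trans ((reach_addEdge_of_reach has).tail (Or.inr ⟨rfl, rfl⟩))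
    (reach_addEdge_of_reach htb)

lemma reach_addEdge_cases {a b : V} (h : Reach (AddEdge E s t) a b) :
    Reach E a b ∨ (Reach E a s ∧ Reach (AddEdge E s t) t b) := by
  induction h with
  | refl => exact Or.inl ReflTransGen.refl
  | tail _ hcb ih =>
    rcases hcb with hcb | ⟨rfl, rfl⟩
    · exact ih.imp (fun hac => hac.tail hcb) fun ⟨has, htc⟩ => ⟨has, htc.tail (Or.inl hcb)⟩
    · exact Or.inr ⟨ih.elim id And.left, ReflTransGen.refl⟩

lemma reach_of_reach_addEdge {a b : V} (has : ¬ Reach E a s)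
    (h : Reach (AddEdge E s t) a b) : Reach E a b :=
  (reach_addEdge_cases h).resolve_right fun h' => has h'.1

lemma not_reach_of_isAcyclicDigraph_addEdge (h : IsAcyclicDigraph (AddEdge E s t)) :
    ¬ Reach E t s := fun hts =>
  h t (TransGen.tail' (reach_addEdge_of_reach hts) (Or.inr ⟨rfl, rfl⟩))

lemma exists_last_exit (S : Set V) {v u : V} (h : Reach E v u) (hv : v ∈ S) (hu : u ∉ S) :
    ∃ b w, Reach E v b ∧ b ∈ S ∧ E b w ∧ ReflTransGen (fun x y => E x y ∧ x ∉ S) w u := by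
  induction h with
  | refl => exact absurd hv hu
  | @tail x u hvx hxu ih =>
    by_cases hx : x ∈ S
    · exact ⟨x, u, hvx, hx, hxu, ReflTransGen.refl⟩
    · obtain ⟨b, w, hvb, hb, hbw, hwx⟩ := ih hx
      exact ⟨b, w, hvb, hb, hbw, hwx.tail ⟨hxu, hx⟩⟩

lemma exists_mem_boundarySet_reach {v u : V} (hts : ¬ Reach E t s) (hv : v ∈ RDown E s)
    (htu : Reach E t u) (hvu : Reach E v u) :
    ∃ b ∈ RSet E v ∩ BoundarySet E s t, u ∈ RSet E b := by
  have hu : u ∉ RDown E s := fun hus => hts (ReflTransGen.trans htu hus)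
  obtain ⟨b, w, hvb, hb, hbw, hwu⟩ := exists_last_exit (RDown E s) hvu hv hu
  exact ⟨b, ⟨hvb, hb, u, w, htu, hbw, hwu⟩,
    (ReflTransGen.mono (fun _ _ => And.left) _ _ hwu).head hbw⟩

end

theorem reach_set_difference_formula_general {V : Type*} (E : V → V → Prop) (s t : V)
    (hG' : IsAcyclicDigraph (AddEdge E s t)) (v : V) :
    (v ∈ RDown E s →
      RSet (AddEdge E s t) v \ RSet E v
        = RUp E t \ ⋃ b ∈ RSet E v ∩ BoundarySet E s t, RSet E b) ∧
    (v ∉ RDown E s → RSet (AddEdge E s t) v \ RSet E v = ∅) := by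
  have hts := not_reach_of_isAcyclicDigraph_addEdge hG'
  refine ⟨fun hv => Set.ext fun u => ⟨?_, ?_⟩, fun hv => ?_⟩
  · rintro ⟨hvu_new, hvu⟩
    obtain hvu_old | ⟨-, htu⟩ := reach_addEdge_cases hvu_new
    · exact absurd hvu_old hvu
    refine ⟨reach_of_reach_addEdge hts htu, ?_⟩
    simp only [Set.mem_iUnion, not_exists]
    exact fun b hb hbu => hvu (ReflTransGen.trans hb.1 hbu)
  · rintro ⟨htu, hB⟩
    refine ⟨reach_addEdge_of_reach_of_reach hv htu, fun hvu => hB ?_⟩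
    obtain ⟨b, hb, hbu⟩ := exists_mem_boundarySet_reach hts hv htu hvu
    exact Set.mem_biUnion hb hbu
  · exact Set.sdiff_eq_empty.2 fun u => reach_of_reach_addEdge hv

/-- If `G` is acyclic, `(s,t) ∉ E(G)` with `s ≠ t`, and `G + (s,t)` is
acyclic, then for `v ∈ R^▽` we have
`R_{G+(s,t)}(v) \ R_G(v) = R_△ \ ⋃_{b ∈ R_G(v) ∩ B} R_G(b)`, and for `v ∉ R^▽` the
difference is empty. -/
theorem reach_set_difference_formula {V : Type*} [Fintype V] (E : V → V → Prop) (s t : V)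
    (hG : IsAcyclicDigraph E) (hst : s ≠ t) (hstE : ¬ E s t)
    (hG' : IsAcyclicDigraph (AddEdge E s t)) (v : V) :
    (v ∈ RDown E s →
      RSet (AddEdge E s t) v \ RSet E v
        = RUp E t \ ⋃ b ∈ RSet E v ∩ BoundarySet E s t, RSet E b) ∧
    (v ∉ RDown E s → RSet (AddEdge E s t) v \ RSet E v = ∅) :=
  reach_set_difference_formula_general E s t hG' v
end

section
/- Let G be an acyclic digraph, (s,t) a pair of distinct vertices with (s,t) ∉ E(G) such that G+(s,t) is acyclic, and a : V(G) → ℝ a vertex weighting. Then for every vertex v ∈ R^▽, the weighted reachability number satisfies r_{G+(s,t),a}(v) = r_{G,a}(v) + a(R_△ \ ⋃_{b ∈ R_G(v) ∩ B} R_G(b)). -/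
variable {V : Type*}

/-! Adding the edge `(s,t)` enlarges the reachability set of a vertex `v ∈ R^▽` exactly by
`R_△`, so the formula amounts to `R_△ \ ⋃_{b ∈ R_G(v) ∩ B} R_G(b) = R_△ \ R_G(v)`.
Acyclicity of `G + (s,t)` makes `R_△` and `R^▽` disjoint, so a path from `v ∈ R^▽` to a vertex
of `R_△` has a last vertex in `R^▽`; that vertex is a boundary through which the path passes. -/

variable {E : V → V → Prop} {s t : V}

theorem Reach.addEdge {u w : V} (h : Reach E u w) : Reach (AddEdge E s t) u w :=
  Relation.ReflTransGen.mono (fun _ _ => Or.inl) _ _ h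

theorem disjoint_rUp_rDown (hG' : IsAcyclicDigraph (AddEdge E s t)) :
    Disjoint (RUp E t) (RDown E s) := by
  refine Set.disjoint_left.mpr fun u (htu : Reach E t u) (hus : Reach E u s) => hG' t ?_
  exact Relation.TransGen.tail' (Reach.addEdge (htu.trans hus)) (Or.inr ⟨rfl, rfl⟩)

theorem rSet_addEdge {v : V} (hv : v ∈ RDown E s) :
    RSet (AddEdge E s t) v = RSet E v ∪ RUp E t := by
  ext u
  constructor
  · intro h
    induction h with
    | refl => exact Or.inl Relation.ReflTransGen.refl
    | tail _ e ih =>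
      rcases e with e | ⟨rfl, rfl⟩
      · exact ih.imp (·.tail e) (·.tail e)
      · exact Or.inr Relation.ReflTransGen.refl
  · rintro (h | h)
    · exact h.addEdge
    · exact ((Reach.addEdge hv).tail (Or.inr ⟨rfl, rfl⟩)).trans h.addEdge

theorem reach_avoiding_or_exists_boundary {v u : V} (h : Reach E v u) (hu : u ∈ RUp E t) :
    Relation.ReflTransGen (fun x y => E x y ∧ x ∉ RDown E s) v u ∨
      ∃ b ∈ BoundarySet E s t, Reach E v b ∧ Reach E b u := by
  induction h using Relation.ReflTransGen.head_induction_on with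
  | refl => exact Or.inl Relation.ReflTransGen.refl
  | @head x w e hwu ih =>
    rcases ih with hrest | ⟨b, hb, hwb, hbu⟩
    · by_cases hx : x ∈ RDown E s
      · exact Or.inr ⟨x, ⟨hx, u, w, hu, e, hrest⟩, Relation.ReflTransGen.refl,
          Relation.ReflTransGen.head e hwu⟩
      · exact Or.inl (Relation.ReflTransGen.head ⟨e, hx⟩ hrest)
    · exact Or.inr ⟨b, hb, Relation.ReflTransGen.head e hwb, hbu⟩

theorem exists_boundary_of_reach {v u : V} (hv : v ∈ RDown E s) (hu : u ∈ RUp E t)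
    (hus : u ∉ RDown E s) (hvu : Reach E v u) :
    ∃ b ∈ BoundarySet E s t, Reach E v b ∧ Reach E b u := by
  refine (reach_avoiding_or_exists_boundary hvu hu).resolve_left fun hpath => ?_
  rcases hpath.cases_head with rfl | ⟨w, ⟨_, hvs⟩, _⟩
  · exact hus hv
  · exact hvs hv

theorem rUp_diff_iUnion_boundary (hdisj : Disjoint (RUp E t) (RDown E s)) {v : V}
    (hv : v ∈ RDown E s) :
    RUp E t \ ⋃ b ∈ RSet E v ∩ BoundarySet E s t, RSet E b = RUp E t \ RSet E v := by
  ext u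
  simp only [Set.mem_sdiff, Set.mem_iUnion, Set.mem_inter_iff, exists_prop, and_congr_right_iff]
  intro hu
  refine not_congr ⟨fun ⟨b, ⟨hvb, _⟩, hbu⟩ => hvb.trans hbu, fun hvu => ?_⟩
  obtain ⟨b, hb, hvb, hbu⟩ :=
    exists_boundary_of_reach hv hu (Set.disjoint_left.mp hdisj hu) hvu
  exact ⟨b, ⟨hvb, hb⟩, hbu⟩

theorem wreach_update_formula_general {V : Type*} [Fintype V] (E : V → V → Prop) (s t : V)
    (hG' : IsAcyclicDigraph (AddEdge E s t)) (a : V → ℝ)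
    (v : V) (hv : v ∈ RDown E s) :
    wReach (AddEdge E s t) a v
      = wReach E a v
        + ∑ᶠ u ∈ RUp E t \ ⋃ b ∈ RSet E v ∩ BoundarySet E s t, RSet E b, a u := by
  have hunion : RSet (AddEdge E s t) v = RSet E v ∪ (RUp E t \ RSet E v) := by
    rw [rSet_addEdge hv, Set.union_sdiff_self]
  unfold wReach
  rw [rUp_diff_iUnion_boundary (disjoint_rUp_rDown hG') hv, hunion,
    finsum_mem_union Set.disjoint_sdiff_right (Set.toFinite _) (Set.toFinite _)]

/-- If `G` is acyclic, `(s,t) ∉ E(G)` with `s ≠ t`, `G + (s,t)` is acyclic,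
and `a` is a vertex weighting, then for every `v ∈ R^▽`,
`r_{G+(s,t),a}(v) = r_{G,a}(v) + a(R_△ \ ⋃_{b ∈ R_G(v) ∩ B} R_G(b))`. -/
theorem wreach_update_formula {V : Type*} [Fintype V] (E : V → V → Prop) (s t : V)
    (hG : IsAcyclicDigraph E) (hst : s ≠ t) (hstE : ¬ E s t)
    (hG' : IsAcyclicDigraph (AddEdge E s t)) (a : V → ℝ)
    (v : V) (hv : v ∈ RDown E s) :
    wReach (AddEdge E s t) a v
      = wReach E a v
        + ∑ᶠ u ∈ RUp E t \ ⋃ b ∈ RSet E v ∩ BoundarySet E s t, RSet E b, a u :=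
  wreach_update_formula_general E s t hG' a v hv
end

section
/- Let G be an acyclic digraph and (s,t) a pair of distinct vertices with (s,t) ∉ E(G) such that G+(s,t) is acyclic. If a vertex v ∈ R^▽ \ B has exactly one out-neighbor in the induced subgraph G[R^▽], say w, then v and w have the same restricted boundary set; i.e., R_G(v) ∩ B = R_G(w) ∩ B. -/
variable {V : Type*}

theorem RSet_subset_of_edge {E : V → V → Prop} {v w : V} (h : E v w) : RSet E w ⊆ RSet E v :=
  fun _ hu => Relation.ReflTransGen.head h hu

theorem mem_RDown_of_reach {E : V → V → Prop} {s u x : V} (h : Reach E u x)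
    (hx : x ∈ RDown E s) : u ∈ RDown E s :=
  Relation.ReflTransGen.trans h hx

theorem BoundarySet_subset_RDown (E : V → V → Prop) (s t : V) : BoundarySet E s t ⊆ RDown E s :=
  fun _ hb => hb.1

/-- Every path from `v` into `B` leaves `v` (as `v ∉ B`) through an edge into `D`, since `D` is
closed under reaching it; that edge can only be `v → w`. -/
theorem RSet_inter_eq_of_unique_succ {E : V → V → Prop} {B D : Set V} {v w : V}
    (hBD : B ⊆ D) (hD : ∀ ⦃x y⦄, Reach E x y → y ∈ D → x ∈ D) (hvB : v ∉ B) (hvw : E v w)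
    (huniq : ∀ w' ∈ D, E v w' → w' = w) :
    RSet E v ∩ B = RSet E w ∩ B := by
  refine subset_antisymm ?_ (Set.inter_subset_inter_left B (RSet_subset_of_edge hvw))
  rintro b ⟨hvb, hb⟩
  rcases Relation.ReflTransGen.cases_head hvb with rfl | ⟨c, hvc, hcb⟩
  · exact absurd hb hvB
  · obtain rfl := huniq c (hD hcb (hBD hb)) hvc
    exact ⟨hcb, hb⟩

theorem restricted_boundary_set_eq_of_unique_outneighbor_general {V : Type*}
    (E : V → V → Prop) (s t : V) (v w : V) (hvB : v ∉ BoundarySet E s t) (hvw : E v w)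
    (huniq : ∀ w', w' ∈ RDown E s → E v w' → w' = w) :
    RSet E v ∩ BoundarySet E s t = RSet E w ∩ BoundarySet E s t :=
  RSet_inter_eq_of_unique_succ (BoundarySet_subset_RDown E s t)
    (fun _ _ h hy => mem_RDown_of_reach h hy) hvB hvw huniq

/-- If `G` is acyclic, `(s,t) ∉ E(G)` with `s ≠ t`, `G + (s,t)` is acyclic,
and `v ∈ R^▽ \ B` has exactly one out-neighbor `w` in the induced subgraph `G[R^▽]`,
then `v` and `w` have the same restricted boundary set: `R_G(v) ∩ B = R_G(w) ∩ B`. -/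
theorem restricted_boundary_set_eq_of_unique_outneighbor {V : Type*} [Fintype V]
    (E : V → V → Prop) (s t : V)
    (hG : IsAcyclicDigraph E) (hst : s ≠ t) (hstE : ¬ E s t)
    (hG' : IsAcyclicDigraph (AddEdge E s t)) (v w : V)
    (hv : v ∈ RDown E s) (hvB : v ∉ BoundarySet E s t)
    (hw : w ∈ RDown E s) (hvw : E v w)
    (huniq : ∀ w', w' ∈ RDown E s → E v w' → w' = w) :
    RSet E v ∩ BoundarySet E s t = RSet E w ∩ BoundarySet E s t :=
  restricted_boundary_set_eq_of_unique_outneighbor_general E s t v w hvB hvw huniq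
end

section
/- Let G be an acyclic digraph and (s,t) a pair of distinct vertices with (s,t) ∉ E(G) such that G+(s,t) is acyclic. Then for every vertex v ∈ R^▽, every vertex of R_△ that v can reach in G is reachable from some boundary that v can reach; i.e., R_G(v) ∩ R_△ ⊆ ⋃_{b ∈ R_G(v) ∩ B} R_G(b). -/
variable {V : Type*}

/-! A vertex `u ∈ R_△` lies outside `R^▽`, since otherwise `s → t ⇝ u ⇝ s` would be a cycle
of `G + (s,t)`. So a path from `v ∈ R^▽` to `u` has an edge `(b, w)` leaving `R^▽`; as `R^▽` is
closed under predecessors, the rest of the path never returns to `R^▽`, which makes `b` a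
boundary. -/

namespace Relation.ReflTransGen

variable {α : Type*} {r : α → α → Prop} {S : Set α} {a c : α}

theorem exists_edge_out_of_set (h : ReflTransGen r a c) (ha : a ∈ S) (hc : c ∉ S) :
    ∃ b d, ReflTransGen r a b ∧ b ∈ S ∧ r b d ∧ d ∉ S ∧ ReflTransGen r d c := by
  induction h using head_induction_on with
  | refl => exact absurd ha hc
  | @head x y hxy hyc ih =>
    by_cases hy : y ∈ S
    · obtain ⟨b, d, hxb, hb, hbd, hd, hdc⟩ := ih hy
      exact ⟨b, d, hxb.head hxy, hb, hbd, hd, hdc⟩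
    · exact ⟨x, y, refl, ha, hxy, hy, hyc⟩

theorem avoiding_of_pred_closed (hS : ∀ x y, r x y → y ∈ S → x ∈ S)
    (h : ReflTransGen r a c) (ha : a ∉ S) :
    ReflTransGen (fun x y => r x y ∧ x ∉ S) a c := by
  induction h using head_induction_on with
  | refl => exact refl
  | @head x y hxy _ ih => exact head ⟨hxy, ha⟩ (ih fun hy => ha (hS x y hxy hy))

end Relation.ReflTransGen

section Boundary

variable {V : Type*} {E : V → V → Prop} {s t : V}

theorem mem_rDown_of_edge {x y : V} (hxy : E x y) (hy : y ∈ RDown E s) : x ∈ RDown E s :=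
  Relation.ReflTransGen.head hxy hy

theorem notMem_rDown_of_mem_rUp (hG' : IsAcyclicDigraph (AddEdge E s t)) {u : V}
    (hu : u ∈ RUp E t) : u ∉ RDown E s := by
  intro hus
  have lift : ∀ {x y}, Reach E x y → Relation.ReflTransGen (AddEdge E s t) x y :=
    fun h => Relation.ReflTransGen.mono (fun _ _ => Or.inl) _ _ h
  exact hG' s (Relation.TransGen.head' (Or.inr ⟨rfl, rfl⟩) ((lift hu).trans (lift hus)))

theorem mem_boundarySet_of_edge_out {b w u : V} (hb : b ∈ RDown E s) (hbw : E b w)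
    (hw : w ∉ RDown E s) (hwu : Reach E w u) (hu : u ∈ RUp E t) : b ∈ BoundarySet E s t :=
  ⟨hb, u, w, hu, hbw, hwu.avoiding_of_pred_closed (fun _ _ => mem_rDown_of_edge) hw⟩

end Boundary

theorem reach_inter_rup_subset_boundary_reach_general {V : Type*}
    (E : V → V → Prop) (s t : V)
    (hG' : IsAcyclicDigraph (AddEdge E s t)) (v : V) (hv : v ∈ RDown E s) :
    RSet E v ∩ RUp E t ⊆ ⋃ b ∈ RSet E v ∩ BoundarySet E s t, RSet E b := by
  rintro u ⟨hvu, hu⟩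
  obtain ⟨b, w, hvb, hb, hbw, hw, hwu⟩ :=
    Relation.ReflTransGen.exists_edge_out_of_set hvu hv (notMem_rDown_of_mem_rUp hG' hu)
  exact Set.mem_iUnion₂.mpr
    ⟨b, ⟨hvb, mem_boundarySet_of_edge_out hb hbw hw hwu hu⟩, Relation.ReflTransGen.head hbw hwu⟩

/-- If `G` is acyclic, `(s,t) ∉ E(G)` with `s ≠ t`, and `G + (s,t)` is
acyclic, then for every `v ∈ R^▽`, every vertex of `R_△` reachable from `v` in `G` is
reachable from some boundary reachable from `v`:
`R_G(v) ∩ R_△ ⊆ ⋃_{b ∈ R_G(v) ∩ B} R_G(b)`. -/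
theorem reach_inter_rup_subset_boundary_reach {V : Type*} [Fintype V]
    (E : V → V → Prop) (s t : V)
    (hG : IsAcyclicDigraph E) (hst : s ≠ t) (hstE : ¬ E s t)
    (hG' : IsAcyclicDigraph (AddEdge E s t)) (v : V) (hv : v ∈ RDown E s) :
    RSet E v ∩ RUp E t ⊆ ⋃ b ∈ RSet E v ∩ BoundarySet E s t, RSet E b :=
  reach_inter_rup_subset_boundary_reach_general E s t hG' v hv
end
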